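/- Let n_1,…,n_J be positive integers, N = n_1+⋯+n_J, and m a positive integer. Let C* ∈ ℝ^{m×m} be symmetric positive definite, U ∈ ℝ^{N×m}, and let C ∈ ℝ^{N×N} be symmetric with C − U (C*)^{-1} Uᵀ positive semidefinite. Let R ∈ ℝ^{N×N} be the block-diagonal matrix (with respect to the partition into blocks of sizes n_1,…,n_J) whose i-th diagonal block equals the i-th diagonal block of C − U (C*)^{-1} Uᵀ, and assume R is positive definite. Set C_1 := R + U (C*)^{-1} Uᵀ. Then tr(C_1^{-1} C) ≤ N + m. -/

import Mathlib

/-!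
Write `C = E + B` with `E = C - U C*⁻¹ Uᵀ ⪰ 0` and `B = U C*⁻¹ Uᵀ`, so that `C₁ = R + B`.

Since `C₁ ⪰ R` and inversion is Loewner-antitone, `C₁⁻¹ ⪯ R⁻¹`; pairing with `E ⪰ 0` gives
`tr (C₁⁻¹ E) ≤ tr (R⁻¹ E)`. As `R⁻¹` is block diagonal, `tr (R⁻¹ E)` only sees the diagonal
blocks of `E`, which are those of `R`; hence `tr (R⁻¹ E) = tr (R⁻¹ R) = N`.

For the other term, `C₁ - U C*⁻¹ Uᵀ = R ⪰ 0`. The two Schur complements of `[[C₁, U], [Uᵀ, C*]]`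
are positive semidefinite together, so `Uᵀ C₁⁻¹ U ⪯ C*` and
`tr (C₁⁻¹ B) = tr (C*⁻¹ Uᵀ C₁⁻¹ U) ≤ tr (C*⁻¹ C*) = m`.
-/

open Matrix

namespace Matrix

section SchurComplement

variable {ι κ K : Type*} [Fintype ι] [Fintype κ] [DecidableEq ι] [DecidableEq κ]
  [Field K] [PartialOrder K] [StarRing K] [StarOrderedRing K]

theorem PosDef.posSemidef_sub_mul_inv_mul_conjTranspose_iff {A : Matrix ι ι K}
    {D : Matrix κ κ K} (hA : A.PosDef) (hD : D.PosDef) (B : Matrix ι κ K) :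
    (A - B * D⁻¹ * Bᴴ).PosSemidef ↔ (D - Bᴴ * A⁻¹ * B).PosSemidef := by
  have := hA.isUnit.invertible
  have := hD.isUnit.invertible
  rw [← PosDef.fromBlocks₂₂ A B hD, PosDef.fromBlocks₁₁ B D hA]

theorem PosDef.posSemidef_inv_sub_inv {A B : Matrix ι ι K} (hA : A.PosDef) (hB : B.PosDef)
    (hAB : (B - A).PosSemidef) : (A⁻¹ - B⁻¹).PosSemidef := by
  have := hA.isUnit.invertible
  simpa using (hB.posSemidef_sub_mul_inv_mul_conjTranspose_iff hA.inv 1).mp (by simpa using hAB)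

end SchurComplement

section Trace

open scoped ComplexOrder

variable {ι κ 𝕜 : Type*} [Fintype ι] [Fintype κ] [DecidableEq ι] [DecidableEq κ] [RCLike 𝕜]

open scoped MatrixOrder in
theorem PosSemidef.trace_mul_nonneg {A B : Matrix ι ι 𝕜} (hA : A.PosSemidef)
    (hB : B.PosSemidef) : 0 ≤ (A * B).trace := by
  set S := CFC.sqrt B
  have hS : Sᴴ = S := (CFC.sqrt_nonneg B).isSelfAdjoint.star_eq
  have hSS : S * S = B := CFC.sqrt_mul_sqrt_self B hB.nonneg
  rw [← hSS, ← Matrix.mul_assoc, trace_mul_cycle]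
  simpa [hS] using (hA.conjTranspose_mul_mul_same S).trace_nonneg

theorem PosDef.trace_inv_mul_antitone {A B E : Matrix ι ι 𝕜} (hA : A.PosDef) (hB : B.PosDef)
    (hAB : (B - A).PosSemidef) (hE : E.PosSemidef) :
    (B⁻¹ * E).trace ≤ (A⁻¹ * E).trace := by
  simpa [sub_mul] using (hA.posSemidef_inv_sub_inv hB hAB).trace_mul_nonneg hE

theorem PosDef.trace_inv_mul_mul_inv_mul_conjTranspose_le {Q : Matrix ι ι 𝕜}
    {P : Matrix κ κ 𝕜} (hQ : Q.PosDef) (hP : P.PosDef) (U : Matrix ι κ 𝕜)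
    (h : (Q - U * P⁻¹ * Uᴴ).PosSemidef) :
    (Q⁻¹ * (U * P⁻¹ * Uᴴ)).trace ≤ Fintype.card κ := by
  have hSchur := (hQ.posSemidef_sub_mul_inv_mul_conjTranspose_iff hP U).mp h
  have hle : (P⁻¹ * (Uᴴ * Q⁻¹ * U)).trace ≤ (P⁻¹ * P).trace := by
    simpa [mul_sub] using hP.inv.posSemidef.trace_mul_nonneg hSchur
  calc (Q⁻¹ * (U * P⁻¹ * Uᴴ)).trace = (P⁻¹ * (Uᴴ * Q⁻¹ * U)).trace := by
        rw [show Q⁻¹ * (U * P⁻¹ * Uᴴ) = Q⁻¹ * U * (P⁻¹ * Uᴴ) by simp only [Matrix.mul_assoc],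
          trace_mul_comm]
        simp only [Matrix.mul_assoc]
    _ ≤ (P⁻¹ * P).trace := hle
    _ = Fintype.card κ := by
        rw [nonsing_inv_mul _ ((isUnit_iff_isUnit_det P).mp hP.isUnit), trace_one]

end Trace

section BlockDiagonal

variable {o α : Type*} {m : o → Type*}

theorem blockDiagonal'_blockDiag' [DecidableEq o] [Zero α] {M : Matrix (Σ i, m i) (Σ i, m i) α}
    (hM : ∀ p q : Σ i, m i, p.1 ≠ q.1 → M p q = 0) : blockDiagonal' M.blockDiag' = M := by
  ext ⟨i, k⟩ ⟨j, l⟩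
  by_cases h : i = j
  · subst h
    rw [blockDiagonal'_apply_eq, blockDiag'_apply]
  · rw [blockDiagonal'_apply_ne _ _ _ h, hM _ _ h]

variable [Fintype o] [DecidableEq o] [∀ i, Fintype (m i)]

theorem trace_blockDiagonal'_mul [NonUnitalNonAssocSemiring α] (D : ∀ i, Matrix (m i) (m i) α)
    (E : Matrix (Σ i, m i) (Σ i, m i) α) :
    (blockDiagonal' D * E).trace = ∑ i, (D i * E.blockDiag' i).trace := by
  simp only [trace, diag, mul_apply, blockDiag'_apply, ← Finset.univ_sigma_univ, Finset.sum_sigma]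
  refine Finset.sum_congr rfl fun i _ ↦ Finset.sum_congr rfl fun k _ ↦ ?_
  rw [Finset.sum_eq_single i (fun j _ hj ↦ ?_) (by simp)]
  · simp [blockDiagonal'_apply_eq]
  · simp [blockDiagonal'_apply_ne D _ _ (Ne.symm hj)]

variable [∀ i, DecidableEq (m i)] [CommRing α]

theorem inv_blockDiagonal' {D : ∀ i, Matrix (m i) (m i) α} (hD : ∀ i, IsUnit (D i).det) :
    (blockDiagonal' D)⁻¹ = blockDiagonal' fun i ↦ (D i)⁻¹ := by
  refine inv_eq_right_inv ?_
  rw [← blockDiagonal'_mul, ← blockDiagonal'_one]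
  exact congrArg blockDiagonal' (funext fun i ↦ mul_nonsing_inv _ (hD i))

theorem trace_inv_mul_eq_card_of_blockDiag'_eq {M E : Matrix (Σ i, m i) (Σ i, m i) α}
    (hM : ∀ p q : Σ i, m i, p.1 ≠ q.1 → M p q = 0) (hblocks : ∀ i, IsUnit (M.blockDiag' i).det)
    (hE : E.blockDiag' = M.blockDiag') :
    (M⁻¹ * E).trace = Fintype.card (Σ i, m i) := by
  rw [← blockDiagonal'_blockDiag' hM, inv_blockDiagonal' hblocks, trace_blockDiagonal'_mul, hE]
  simp [nonsing_inv_mul _ (hblocks _), Fintype.card_sigma]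

end BlockDiagonal

end Matrix

theorem trace_inv_mul_le_general
    {J m : ℕ} (n : Fin J → ℕ)
    (N : ℕ) (hN : N = ∑ i, n i)
    (Cstar : Matrix (Fin m) (Fin m) ℝ) (hCstar : Cstar.PosDef)
    (U : Matrix ((i : Fin J) × Fin (n i)) (Fin m) ℝ)
    (C : Matrix ((i : Fin J) × Fin (n i)) ((i : Fin J) × Fin (n i)) ℝ)
    (hPSD : (C - U * Cstar⁻¹ * Uᵀ).PosSemidef)
    (R : Matrix ((i : Fin J) × Fin (n i)) ((i : Fin J) × Fin (n i)) ℝ)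
    (hRdiag : ∀ (i : Fin J) (k l : Fin (n i)),
      R ⟨i, k⟩ ⟨i, l⟩ = (C - U * Cstar⁻¹ * Uᵀ) ⟨i, k⟩ ⟨i, l⟩)
    (hRoff : ∀ p q : (i : Fin J) × Fin (n i), p.1 ≠ q.1 → R p q = 0)
    (hR : R.PosDef) :
    ((R + U * Cstar⁻¹ * Uᵀ)⁻¹ * C).trace ≤ (N : ℝ) + (m : ℝ) := by
  set B := U * Cstar⁻¹ * Uᵀ
  have hB : B.PosSemidef := by
    simpa using hCstar.inv.posSemidef.mul_mul_conjTranspose_same U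
  have hC₁ : (R + B).PosDef := hR.add_posSemidef hB
  have hblocks (i : Fin J) : IsUnit (R.blockDiag' i).det :=
    (hR.submatrix sigma_mk_injective).det_pos.ne'.isUnit
  have hRE : (R⁻¹ * (C - B)).trace = N := by
    rw [trace_inv_mul_eq_card_of_blockDiag'_eq (E := C - B) hRoff hblocks
      (funext fun i ↦ ext fun k l ↦ (hRdiag i k l).symm)]
    simp [hN]
  have hE_le : ((R + B)⁻¹ * (C - B)).trace ≤ (R⁻¹ * (C - B)).trace :=
    hR.trace_inv_mul_antitone hC₁ (by simpa using hB) hPSD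
  have hB_le : ((R + B)⁻¹ * B).trace ≤ m := by
    simpa using hC₁.trace_inv_mul_mul_inv_mul_conjTranspose_le hCstar U
      (by simpa [B] using hR.posSemidef)
  calc ((R + B)⁻¹ * C).trace = ((R + B)⁻¹ * (C - B)).trace + ((R + B)⁻¹ * B).trace := by
        rw [← trace_add, ← Matrix.mul_add, sub_add_cancel]
    _ ≤ N + m := by linarith

/-- Trace inequality from the proof of Proposition 1: with `R` the block-diagonal matrix whose
diagonal blocks are those of `C − U (C*)⁻¹ Uᵀ` (assumed PD), and `C₁ = R + U (C*)⁻¹ Uᵀ`,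
one has `tr(C₁⁻¹ C) ≤ N + m`. -/
theorem trace_inv_mul_le
    {J m : ℕ} (hJ : 0 < J) (hm : 0 < m) (n : Fin J → ℕ) (hn : ∀ i, 0 < n i)
    (N : ℕ) (hN : N = ∑ i, n i)
    (Cstar : Matrix (Fin m) (Fin m) ℝ) (hCstar : Cstar.PosDef)
    (U : Matrix ((i : Fin J) × Fin (n i)) (Fin m) ℝ)
    (C : Matrix ((i : Fin J) × Fin (n i)) ((i : Fin J) × Fin (n i)) ℝ)
    (hCsymm : C.IsSymm)
    (hPSD : (C - U * Cstar⁻¹ * Uᵀ).PosSemidef)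
    (R : Matrix ((i : Fin J) × Fin (n i)) ((i : Fin J) × Fin (n i)) ℝ)
    (hRdiag : ∀ (i : Fin J) (k l : Fin (n i)),
      R ⟨i, k⟩ ⟨i, l⟩ = (C - U * Cstar⁻¹ * Uᵀ) ⟨i, k⟩ ⟨i, l⟩)
    (hRoff : ∀ p q : (i : Fin J) × Fin (n i), p.1 ≠ q.1 → R p q = 0)
    (hR : R.PosDef) :
    ((R + U * Cstar⁻¹ * Uᵀ)⁻¹ * C).trace ≤ (N : ℝ) + (m : ℝ) :=
  trace_inv_mul_le_general n N hN Cstar hCstar U C hPSD R hRdiag hRoff hR
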